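/- arXiv:1411.7795 — 2 statements merged into one kernel-verified Lean document; each statement's English description precedes it below -/
import Mathlib

section
/- Let $0 < \sigma^2 < 1$ and $0 < \gamma < \sigma^2$. Then the relative entropy function satisfies $H\big(\frac{\gamma+\sigma^2}{1+\sigma^2}\,\big|\,\frac{\sigma^2}{1+\sigma^2}\big) \ge \frac{\gamma^2}{3\sigma^2}$, where $H(x|p) = x\log\frac{x}{p} + (1-x)\log\frac{1-x}{1-p}$. -/
/-!
With `x = (γ + σ²)/(1 + σ²)` and `p = σ²/(1 + σ²)` the two ratios in `H(x|p)` simplify to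
`x/p = 1 + γ/σ²` and `(1 - x)/(1 - p) = 1 - γ`. Bounding `log (1 + u) ≥ 2u/(u + 2)` and
`log t ≥ (t - t⁻¹)/2` for `t ≤ 1` (i.e. `sinh y ≤ y` for `y ≤ 0`) turns `H` into the rational
function `γ²(2 + γ + 2σ²) / (2(1 + σ²)(γ + 2σ²))`, which dominates `γ²/(3σ²)` as soon as `γ < σ²`.
-/

/-- Binary relative entropy `H(x|p) = x log(x/p) + (1-x) log((1-x)/(1-p))`. -/
noncomputable def relEntH (x p : ℝ) : ℝ :=
  x * Real.log (x / p) + (1 - x) * Real.log ((1 - x) / (1 - p))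

open Real

lemma relEntH_add_div_one_add {s : ℝ} (γ : ℝ) (hs : 0 < s) :
    relEntH ((γ + s) / (1 + s)) (s / (1 + s)) =
      (γ + s) / (1 + s) * log (1 + γ / s) + (1 - γ) / (1 + s) * log (1 - γ) := by
  have : 1 + s ≠ 0 := by positivity
  unfold relEntH
  congr 3 <;> field_simp <;> ring

lemma sub_inv_div_two_le_log {t : ℝ} (ht₀ : 0 < t) (ht₁ : t ≤ 1) : (t - t⁻¹) / 2 ≤ log t := by
  rw [← sinh_log ht₀]
  exact sinh_le_self_iff.2 (log_nonpos ht₀.le ht₁)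

/-- For `0 < σ² < 1` and `0 < γ < σ²`,
`H((γ+σ²)/(1+σ²) | σ²/(1+σ²)) ≥ γ²/(3σ²)`. -/
theorem relEnt_lower_bound (σ2 γ : ℝ) (hσ0 : 0 < σ2) (hσ1 : σ2 < 1)
    (hγ0 : 0 < γ) (hγσ : γ < σ2) :
    relEntH ((γ + σ2) / (1 + σ2)) (σ2 / (1 + σ2)) ≥ γ ^ 2 / (3 * σ2) := by
  have hγ1 : 0 < 1 - γ := by linarith
  rw [ge_iff_le, relEntH_add_div_one_add γ hσ0]
  calc γ ^ 2 / (3 * σ2)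
      ≤ (γ + σ2) / (1 + σ2) * (2 * (γ / σ2) / (γ / σ2 + 2))
        + (1 - γ) / (1 + σ2) * (((1 - γ) - (1 - γ)⁻¹) / 2) := by
        have hmiddle : (γ + σ2) / (1 + σ2) * (2 * (γ / σ2) / (γ / σ2 + 2))
            + (1 - γ) / (1 + σ2) * (((1 - γ) - (1 - γ)⁻¹) / 2)
            = γ ^ 2 * (2 + γ + 2 * σ2) / (2 * (1 + σ2) * (γ + 2 * σ2)) := by
          field_simp
          ring
        rw [hmiddle, div_le_div_iff₀ (by positivity) (by positivity)]
        nlinarith [mul_pos (pow_pos hγ0 2) (sub_pos.2 hγσ), mul_pos (pow_pos hγ0 2) hσ0]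
    _ ≤ (γ + σ2) / (1 + σ2) * log (1 + γ / σ2) + (1 - γ) / (1 + σ2) * log (1 - γ) := by
        gcongr
        · exact le_log_one_add_of_nonneg (by positivity)
        · exact sub_inv_div_two_le_log hγ1 (by linarith)
end

section
/- Let $f : \Sigma \to [-1,1]$ be a function on a finite set $\Sigma$, $\pi$ a probability measure on $\Sigma$ with $\pi(f) = 0$ and $\pi(f^2) \le \sigma^2$. Then for every $\lambda > 0$, $\pi(e^{\lambda f}) \le \frac{1}{1+\sigma^2} e^{-\lambda \sigma^2} + \frac{\sigma^2}{1+\sigma^2} e^{\lambda}$. -/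
/-!
The function `φ t = (exp t - 1 - t) / t²` equals `∫₀¹ (1 - u) exp (u t) du` and is therefore
nondecreasing. With `y = λ (1 + σ²)` and `t = λ (f + σ²) ≤ y` this gives the quadratic majorant
`exp (λ f) ≤ exp (-λ σ²) (1 + t + φ y t²)`, whose expectation depends only on the first two moments
of `f`; the bound on the second moment turns it into the right-hand side.
-/

open Finset

section

open Real

lemma integral_one_sub_mul_exp_mul {x : ℝ} (hx : x ≠ 0) :
    ∫ u in (0 : ℝ)..1, (1 - u) * exp (u * x) = (exp x - 1 - x) / x ^ 2 := by
  have hderiv : ∀ u ∈ Set.uIcc (0 : ℝ) 1,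
      HasDerivAt (fun u => exp (u * x) * ((1 - u) / x + 1 / x ^ 2)) ((1 - u) * exp (u * x)) u := by
    intro u _
    have hexp : HasDerivAt (fun u : ℝ => exp (u * x)) (exp (u * x) * x) u := by
      simpa using ((hasDerivAt_id u).mul_const x).exp
    have hlin : HasDerivAt (fun u : ℝ => (1 - u) / x + 1 / x ^ 2) (-1 / x) u := by
      simpa using (((hasDerivAt_id u).const_sub 1).div_const x).add_const (1 / x ^ 2)
    exact (hexp.mul hlin).congr_deriv (by field_simp; ring)
  rw [intervalIntegral.integral_eq_sub_of_hasDerivAt hderiv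
    (Continuous.intervalIntegrable (by fun_prop) _ _)]
  simp only [one_mul, zero_mul, exp_zero]
  field_simp
  ring

lemma monotone_integral_one_sub_mul_exp_mul :
    Monotone fun x : ℝ => ∫ u in (0 : ℝ)..1, (1 - u) * exp (u * x) := by
  intro x y hxy
  refine intervalIntegral.integral_mono_on zero_le_one
    (Continuous.intervalIntegrable (by fun_prop) _ _)
    (Continuous.intervalIntegrable (by fun_prop) _ _) fun u hu => ?_
  have hexp : exp (u * x) ≤ exp (u * y) := exp_le_exp.mpr (mul_le_mul_of_nonneg_left hxy hu.1)
  exact mul_le_mul_of_nonneg_left hexp (sub_nonneg.mpr hu.2)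

lemma exp_le_one_add_add_mul_sq {x y : ℝ} (hy : y ≠ 0) (hxy : x ≤ y) :
    exp x ≤ 1 + x + (exp y - 1 - y) / y ^ 2 * x ^ 2 := by
  rcases eq_or_ne x 0 with rfl | hx
  · simp
  have hφ := monotone_integral_one_sub_mul_exp_mul hxy
  simp only [integral_one_sub_mul_exp_mul hx, integral_one_sub_mul_exp_mul hy] at hφ
  have hmul := mul_le_mul_of_nonneg_right hφ (sq_nonneg x)
  rw [div_mul_cancel₀ _ (pow_ne_zero 2 hx)] at hmul
  linarith

lemma exp_mul_le_quadratic {lam s x : ℝ} (hlam : 0 < lam) (hs : 1 + s ≠ 0) (hx : x ≤ 1) :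
    exp (lam * x) ≤ exp (-lam * s) * (1 + lam * (x + s) +
      (exp (lam * (1 + s)) - 1 - lam * (1 + s)) / (1 + s) ^ 2 * (x + s) ^ 2) := by
  have hle : lam * (x + s) ≤ lam * (1 + s) := by gcongr
  have hquad := exp_le_one_add_add_mul_sq (mul_ne_zero hlam.ne' hs) hle
  calc exp (lam * x) = exp (-lam * s) * exp (lam * (x + s)) := by rw [← exp_add]; ring_nf
    _ ≤ _ := by
      gcongr
      refine hquad.trans_eq ?_
      field_simp

end

lemma sum_mul_quadratic_of_sum_eq_one_of_sum_mul_eq_zero {S : Type*} [Fintype S] {w f : S → ℝ}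
    (hw1 : ∑ x, w x = 1) (hmean : ∑ x, w x * f x = 0) (a b c s : ℝ) :
    ∑ x, w x * (a + b * (f x + s) + c * (f x + s) ^ 2) =
      a + b * s + c * (∑ x, w x * f x ^ 2 + s ^ 2) := by
  have hexpand : ∀ x, w x * (a + b * (f x + s) + c * (f x + s) ^ 2) =
      (a + b * s + c * s ^ 2) * w x + (b + 2 * c * s) * (w x * f x) + c * (w x * f x ^ 2) := by
    intro x
    ring
  simp only [hexpand, sum_add_distrib, ← mul_sum, hw1, hmean]
  ring

theorem bennett_lemma_general {S : Type*} [Fintype S] (π : S → ℝ) (f : S → ℝ) (σ2 : ℝ)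
    (hπ0 : ∀ x, 0 ≤ π x) (hπ1 : ∑ x, π x = 1)
    (hf : ∀ x, f x ∈ Set.Icc (-1 : ℝ) 1)
    (hmean : ∑ x, π x * f x = 0)
    (hvar : ∑ x, π x * (f x) ^ 2 ≤ σ2) :
    ∀ lam : ℝ, 0 < lam →
      ∑ x, π x * Real.exp (lam * f x) ≤
        (1 / (1 + σ2)) * Real.exp (-lam * σ2) + (σ2 / (1 + σ2)) * Real.exp lam := by
  intro lam hlam
  have hσ2 : 0 ≤ σ2 := (sum_nonneg fun x _ => mul_nonneg (hπ0 x) (sq_nonneg (f x))).trans hvar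
  set y := lam * (1 + σ2) with hy
  set K := (Real.exp y - 1 - y) / (1 + σ2) ^ 2 with hK
  have hK0 : 0 ≤ K := div_nonneg (by linarith [Real.add_one_le_exp y]) (sq_nonneg _)
  calc ∑ x, π x * Real.exp (lam * f x)
      ≤ ∑ x, π x * (Real.exp (-lam * σ2) * (1 + lam * (f x + σ2) + K * (f x + σ2) ^ 2)) :=
        sum_le_sum fun x _ => mul_le_mul_of_nonneg_left
          (exp_mul_le_quadratic hlam (by positivity) (hf x).2) (hπ0 x)
    _ = Real.exp (-lam * σ2) * (1 + lam * σ2 + K * (∑ x, π x * f x ^ 2 + σ2 ^ 2)) := by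
        simp only [mul_left_comm (π _), ← mul_sum,
          sum_mul_quadratic_of_sum_eq_one_of_sum_mul_eq_zero hπ1 hmean]
    _ ≤ Real.exp (-lam * σ2) * (1 + lam * σ2 + K * (σ2 + σ2 ^ 2)) := by gcongr
    _ = _ := by
        have hexp : Real.exp y = Real.exp (lam * σ2) * Real.exp lam := by
          rw [hy, ← Real.exp_add]; ring_nf
        rw [hK, hexp, neg_mul, Real.exp_neg]
        field_simp
        ring

/-- Bennett's lemma: if `f : Σ → [-1,1]` has mean zero and second moment at most `σ²`
under a probability vector `π` on a finite set, then for every `λ > 0`,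
`π(e^{λ f}) ≤ e^{-λσ²}/(1+σ²) + σ² e^{λ}/(1+σ²)`. -/
theorem bennett_lemma {S : Type*} [Fintype S] (π : S → ℝ) (f : S → ℝ) (σ2 : ℝ)
    (hπ0 : ∀ x, 0 ≤ π x) (hπ1 : ∑ x, π x = 1)
    (hf : ∀ x, f x ∈ Set.Icc (-1 : ℝ) 1)
    (hσ2 : 0 < σ2)
    (hmean : ∑ x, π x * f x = 0)
    (hvar : ∑ x, π x * (f x) ^ 2 ≤ σ2) :
    ∀ lam : ℝ, 0 < lam →
      ∑ x, π x * Real.exp (lam * f x) ≤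
        (1 / (1 + σ2)) * Real.exp (-lam * σ2) + (σ2 / (1 + σ2)) * Real.exp lam :=
  bennett_lemma_general π f σ2 hπ0 hπ1 hf hmean hvar
end
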